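/- arXiv:2504.09204 — 4 statements merged into one kernel-verified Lean document; each statement's English description precedes it below -/
import Mathlib

section
/- Let m ≥ 2 be an integer. Every positive root of C_n whose height is divisible by m can be written as a sum of roots of height exactly m; that is, R⁺(m) is contained in the additive submonoid of ℝ^n generated by R_m. -/
/-!
Indices start at `0`, so `ε_i + ε_j` has height `i + j + 1`. A difference `ε_j - ε_i` with
`j - i = k m` telescopes into `k` differences `ε_{a+m} - ε_a`, each a root of height `m`.
For a sum `ε_j + ε_i` with `m ∣ i + j + 1`, the residues `i' = i % m`, `j' = j % m` satisfy
`i' + j' + 1 = m`, so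
`ε_j + ε_i = (ε_j - ε_{j'}) + (ε_i - ε_{i'}) + (ε_{j'} + ε_{i'})`,
where the last summand is a root of height `m` (namely `2 ε_{i'}` if `i' = j'`).
Since `2 ε_i = ε_i + ε_i`, this covers all positive roots.
-/

noncomputable section

/-- The standard basis vector `ε_{i+1}` of `ℝ^n` (0-based index `i`). -/
def eps (n : ℕ) (i : Fin n) : Fin n → ℝ := fun j => if j = i then 1 else 0

/-- The root system of type `Cₙ`. -/
def Croots (n : ℕ) : Set (Fin n → ℝ) :=
  {v | (∃ i j : Fin n, i < j ∧
         (v = eps n j - eps n i ∨ v = -(eps n j - eps n i) ∨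
          v = eps n j + eps n i ∨ v = -(eps n j + eps n i))) ∨
       (∃ i : Fin n, v = (2 : ℝ) • eps n i ∨ v = -((2 : ℝ) • eps n i))}

/-- The height functional for type `Cₙ`. -/
def htC (n : ℕ) (v : Fin n → ℝ) : ℝ := ∑ i : Fin n, v i * ((i : ℝ) + 1 / 2)

section

variable {n m : ℕ}

def rootsOfHeight (n m : ℕ) : Set (Fin n → ℝ) := {u ∈ Croots n | htC n u = m}

lemma htC_eps (i : Fin n) : htC n (eps n i) = (i : ℝ) + 1 / 2 := by
  simp [htC, eps]

lemma htC_add (u v : Fin n → ℝ) : htC n (u + v) = htC n u + htC n v := by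
  simp only [htC, Pi.add_apply, add_mul, Finset.sum_add_distrib]

lemma htC_neg (u : Fin n → ℝ) : htC n (-u) = -htC n u := by
  simp [htC]

lemma htC_eps_sub_eps (i j : Fin n) : htC n (eps n j - eps n i) = (j : ℝ) - i := by
  rw [sub_eq_add_neg, htC_add, htC_neg, htC_eps, htC_eps]
  ring

lemma htC_eps_add_eps (i j : Fin n) : htC n (eps n j + eps n i) = ((i + j + 1 : ℕ) : ℝ) := by
  rw [htC_add, htC_eps, htC_eps]
  push_cast
  ring

lemma eps_add_eps_mem (i j : Fin n) : eps n j + eps n i ∈ Croots n := by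
  rcases lt_trichotomy i j with h | rfl | h
  · exact Or.inl ⟨i, j, h, Or.inr (Or.inr (Or.inl rfl))⟩
  · exact Or.inr ⟨i, Or.inl (two_smul ℝ _).symm⟩
  · exact Or.inl ⟨j, i, h, Or.inr (Or.inr (Or.inl (add_comm _ _)))⟩

lemma eq_eps_sub_eps_or_eq_eps_add_eps_of_pos {v : Fin n → ℝ} (hv : v ∈ Croots n)
    (hpos : 0 < htC n v) :
    (∃ i j : Fin n, i < j ∧ v = eps n j - eps n i) ∨
      ∃ i j : Fin n, v = eps n j + eps n i := by
  rcases hv with ⟨i, j, hij, rfl | rfl | rfl | rfl⟩ | ⟨i, rfl | rfl⟩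
  · exact Or.inl ⟨i, j, hij, rfl⟩
  · have : (i : ℝ) < j := by exact_mod_cast hij
    rw [htC_neg, htC_eps_sub_eps] at hpos
    linarith
  · exact Or.inr ⟨i, j, rfl⟩
  · rw [htC_neg, htC_eps_add_eps] at hpos
    exact ((neg_nonpos.mpr (Nat.cast_nonneg _)).not_gt hpos).elim
  · exact Or.inr ⟨i, i, two_smul ℝ _⟩
  · rw [htC_neg, two_smul, htC_eps_add_eps] at hpos
    exact ((neg_nonpos.mpr (Nat.cast_nonneg _)).not_gt hpos).elim

lemma eps_sub_eps_mem_rootsOfHeight {i j : Fin n} (hm : 0 < m) (h : (j : ℕ) = i + m) :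
    eps n j - eps n i ∈ rootsOfHeight n m :=
  ⟨Or.inl ⟨i, j, Fin.lt_def.mpr (by omega), Or.inl rfl⟩, by
    rw [htC_eps_sub_eps, h]; push_cast; ring⟩

lemma eps_add_eps_mem_rootsOfHeight {i j : Fin n} (h : (i : ℕ) + j + 1 = m) :
    eps n j + eps n i ∈ rootsOfHeight n m :=
  ⟨eps_add_eps_mem i j, by rw [htC_eps_add_eps, h]⟩

lemma eps_sub_eps_mem_closure (hm : 0 < m) {i j : Fin n} (hij : i ≤ j) (h : m ∣ (j : ℕ) - i) :
    eps n j - eps n i ∈ AddSubmonoid.closure (rootsOfHeight n m) := by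
  obtain ⟨k, hk⟩ := h
  induction k generalizing j with
  | zero =>
    rw [Fin.ext (by omega : (j : ℕ) = i), sub_self]
    exact zero_mem _
  | succ k ih =>
    rw [Nat.mul_succ] at hk
    let a : Fin n := ⟨j - m, by omega⟩
    rw [← sub_add_sub_cancel _ (eps n a)]
    refine add_mem (AddSubmonoid.subset_closure ?_) ?_
    · exact eps_sub_eps_mem_rootsOfHeight hm (by simp [a]; omega)
    · exact ih (Fin.le_def.mpr (by simp [a]; omega)) (by simp [a]; omega)

lemma mod_add_mod_add_one_eq_of_dvd (hm : 0 < m) {i j : ℕ} (h : m ∣ i + j + 1) :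
    i % m + j % m + 1 = m := by
  have hi := Nat.mod_lt i hm
  have hj := Nat.mod_lt j hm
  refine Nat.eq_of_dvd_of_lt_two_mul (by omega) ?_ (by omega)
  rw [← Nat.dvd_add_right (Nat.dvd_add (Nat.dvd_sub_mod i) (Nat.dvd_sub_mod j))]
  convert h using 1
  have := Nat.mod_le i m
  have := Nat.mod_le j m
  omega

lemma eps_add_eps_mem_closure (hm : 0 < m) {i j : Fin n} (h : m ∣ (i : ℕ) + j + 1) :
    eps n j + eps n i ∈ AddSubmonoid.closure (rootsOfHeight n m) := by
  let i' : Fin n := ⟨i % m, (Nat.mod_le _ _).trans_lt i.isLt⟩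
  let j' : Fin n := ⟨j % m, (Nat.mod_le _ _).trans_lt j.isLt⟩
  have hsplit : eps n j + eps n i =
      (eps n j - eps n j') + (eps n i - eps n i') + (eps n j' + eps n i') := by abel
  rw [hsplit]
  refine add_mem (add_mem ?_ ?_) (AddSubmonoid.subset_closure
    (eps_add_eps_mem_rootsOfHeight (mod_add_mod_add_one_eq_of_dvd hm h)))
  · exact eps_sub_eps_mem_closure hm (Fin.le_def.mpr (Nat.mod_le _ _)) (Nat.dvd_sub_mod _)
  · exact eps_sub_eps_mem_closure hm (Fin.le_def.mpr (Nat.mod_le _ _)) (Nat.dvd_sub_mod _)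

lemma dvd_of_natCast_eq_mul_intCast {c : ℕ} {l : ℤ} (h : (c : ℝ) = m * l) : m ∣ c :=
  Int.natCast_dvd_natCast.mp ⟨l, by exact_mod_cast h⟩

end

theorem stmt3_general (n : ℕ) (m : ℕ) :
    ∀ v ∈ Croots n, 0 < htC n v → (∃ l : ℤ, htC n v = (m : ℝ) * l) →
      v ∈ AddSubmonoid.closure {u ∈ Croots n | htC n u = (m : ℝ)} := by
  rintro v hv hpos ⟨l, hl⟩
  rcases eq_eps_sub_eps_or_eq_eps_add_eps_of_pos hv hpos with ⟨i, j, hij, rfl⟩ | ⟨i, j, rfl⟩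
  · have hij' : (i : ℕ) < j := hij
    rw [htC_eps_sub_eps, ← Nat.cast_sub hij'.le] at hl
    have hdvd := dvd_of_natCast_eq_mul_intCast hl
    exact eps_sub_eps_mem_closure (Nat.pos_of_dvd_of_pos hdvd (by omega)) hij.le hdvd
  · rw [htC_eps_add_eps] at hl
    have hdvd := dvd_of_natCast_eq_mul_intCast hl
    exact eps_add_eps_mem_closure (Nat.pos_of_dvd_of_pos hdvd (by omega)) hdvd

/-- for `m ≥ 2`, every positive root of `Cₙ` whose height is divisible
by `m` lies in the additive submonoid of `ℝ^n` generated by the set `R_m` of roots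
of height exactly `m`. -/
theorem stmt3 (n : ℕ) (hn : 2 ≤ n) (m : ℕ) (hm : 2 ≤ m) :
    ∀ v ∈ Croots n, 0 < htC n v → (∃ l : ℤ, htC n v = (m : ℝ) * l) →
      v ∈ AddSubmonoid.closure {u ∈ Croots n | htC n u = (m : ℝ)} :=
  stmt3_general n m
end
end

section
/- Let m ≥ 2 be an integer. Then R(m), the set of all roots of C_n whose height is divisible by m, is of Levi type: there exist an element w of the Weyl group W and a subset S of the simple roots {α_1,…,α_n} such that w maps R(m) bijectively onto R ∩ span_ℝ(S). -/
noncomputable section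

/-- The simple roots of `Cₙ`: `α_1 = 2ε_1` and `α_i = ε_i − ε_{i−1}` for `2 ≤ i ≤ n`
(written with 0-based indices). -/
def CsimpleSet (n : ℕ) : Set (Fin n → ℝ) :=
  {v | (∃ i : Fin n, (i : ℕ) = 0 ∧ v = (2 : ℝ) • eps n i) ∨
       (∃ i j : Fin n, (j : ℕ) = (i : ℕ) + 1 ∧ v = eps n j - eps n i)}

/-- The Weyl group of `Cₙ`: the subgroup of `GL(ℝ^n)` (realized as linear
automorphisms of `ℝ^n`) generated by the reflections
`s_γ : v ↦ v − (2⟨v,γ⟩/⟨γ,γ⟩)γ` for roots `γ`. -/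
def CWeyl (n : ℕ) : Subgroup ((Fin n → ℝ) ≃ₗ[ℝ] (Fin n → ℝ)) :=
  Subgroup.closure {σ | ∃ γ ∈ Croots n,
    ∀ v, σ v = v - ((2 * ∑ i, v i * γ i) / (∑ i, γ i * γ i)) • γ}

/-!
Heights are the pairing `ht ρ = ρ ⬝ᵥ y` with `y i = i + 1/2`, and since roots have integer
coordinates, whether `m ∣ ht ρ` only depends on `y` modulo `m`. Reduce every `y i` to its
representative in `[-m/2, m/2]`; it is nonzero because `y i` is a half-integer. A sign change
followed by a permutation of coordinates, which lies in the Weyl group and permutes the roots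
isometrically, turns the reduced vector into an antitone `z` with `0 < z i ≤ m/2`. For such `z`
the bounds leave only two ways for `± ε_i ± ε_j` to pair into `mℤ`: `±(ε_i - ε_j)` with
`z i = z j`, or `z i = z j = m/2`; and `± 2ε_i` pairs into `mℤ` iff `z i = m/2`. These are exactly
the roots in the span of `2ε_1` (present iff `z 0 = m/2`) and of the `ε_{p+1} - ε_p` with
`z p = z (p+1)`, detected by the block sums `∑_{z p = t} ρ p`, which vanish on that span for
every `t ≠ m/2`.
-/
open Set Submodule

section

variable {n : ℕ}

lemma eps_eq_single (i : Fin n) : eps n i = Pi.single i 1 := by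
  ext j; simp [eps, Pi.single_apply]

lemma mem_CWeyl_of_reflection {w : (Fin n → ℝ) ≃ₗ[ℝ] (Fin n → ℝ)} {γ : Fin n → ℝ}
    (hγ : γ ∈ Croots n) (hw : ∀ v, w v = v - ((2 * ∑ i, v i * γ i) / (∑ i, γ i * γ i)) • γ) :
    w ∈ CWeyl n :=
  Subgroup.subset_closure ⟨γ, hγ, hw⟩

def signFlip (F : Finset (Fin n)) : (Fin n → ℝ) ≃ₗ[ℝ] (Fin n → ℝ) :=
  LinearEquiv.ofInvolutive
    (LinearMap.pi fun i => if i ∈ F then -LinearMap.proj i else LinearMap.proj i)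
    (fun v => by ext i; by_cases hi : i ∈ F <;> simp [hi])

@[simp]
lemma signFlip_apply (F : Finset (Fin n)) (v : Fin n → ℝ) (i : Fin n) :
    signFlip F v i = if i ∈ F then -v i else v i := by
  change (LinearMap.pi fun i => if i ∈ F then -LinearMap.proj i else LinearMap.proj i :
    (Fin n → ℝ) →ₗ[ℝ] (Fin n → ℝ)) v i = _
  split_ifs with hi <;> simp [hi]

lemma signFlip_symm (F : Finset (Fin n)) : (signFlip F).symm = signFlip F :=
  LinearEquiv.ext fun v => (signFlip F).symm_apply_eq.mpr <| funext fun i => by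
    by_cases hi : i ∈ F <;> simp [hi]

lemma signFlip_singleton_mem_CWeyl (i : Fin n) : signFlip {i} ∈ CWeyl n := by
  refine mem_CWeyl_of_reflection (γ := (2 : ℝ) • eps n i) (Or.inr ⟨i, Or.inl rfl⟩) fun v => ?_
  ext k
  by_cases hk : k = i <;> simp [eps, hk]; ring

lemma signFlip_mem_CWeyl (F : Finset (Fin n)) : signFlip F ∈ CWeyl n := by
  induction F using Finset.induction with
  | empty => convert (CWeyl n).one_mem; ext; simp
  | insert a F ha ih =>
    convert mul_mem (signFlip_singleton_mem_CWeyl a) ih using 1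
    ext v k
    by_cases hk : k = a
    · subst hk; simp [ha]
    · simp [hk]

lemma funCongrLeft_swap_mem_CWeyl {i j : Fin n} (hij : i ≠ j) :
    LinearEquiv.funCongrLeft ℝ ℝ (Equiv.swap i j) ∈ CWeyl n := by
  have hγ : eps n j - eps n i ∈ Croots n := by
    rcases hij.lt_or_gt with h | h
    · exact Or.inl ⟨i, j, h, Or.inl rfl⟩
    · exact Or.inl ⟨j, i, h, Or.inr (Or.inl (neg_sub _ _).symm)⟩
  refine mem_CWeyl_of_reflection hγ fun v => ?_
  have hv : ∑ k, v k * (eps n j - eps n i) k = v j - v i := by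
    simp [eps_eq_single, mul_sub, Finset.sum_sub_distrib, Pi.single_apply]
  have hγγ : ∑ k, (eps n j - eps n i) k * (eps n j - eps n i) k = 2 := by
    simp [eps_eq_single, mul_sub, Finset.sum_sub_distrib, Pi.single_apply, hij, hij.symm]
    norm_num
  ext k
  rw [hv, hγγ]
  rcases eq_or_ne k i with rfl | hki
  · simp [eps, hij]
  rcases eq_or_ne k j with rfl | hkj
  · simp [eps, hij.symm]
  · simp [eps, hki, hkj, Equiv.swap_apply_of_ne_of_ne]

lemma funCongrLeft_mem_CWeyl (σ : Equiv.Perm (Fin n)) :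
    LinearEquiv.funCongrLeft ℝ ℝ σ ∈ CWeyl n := by
  induction σ using Equiv.Perm.swap_induction_on with
  | one => exact (CWeyl n).one_mem
  | swap_mul f i j hij ih => exact mul_mem ih (funCongrLeft_swap_mem_CWeyl hij)

lemma mem_Croots_iff {v : Fin n → ℝ} :
    v ∈ Croots n ↔
      (∃ i j, i ≠ j ∧ ∃ a b : ℤ, IsUnit a ∧ IsUnit b ∧ v = (a : ℝ) • eps n i + (b : ℝ) • eps n j) ∨
        ∃ i, ∃ a : ℤ, IsUnit a ∧ v = (2 * a : ℝ) • eps n i := by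
  have h1 : IsUnit (1 : ℤ) := isUnit_one
  have h2 : IsUnit (-1 : ℤ) := isUnit_one.neg
  constructor
  · rintro (⟨i, j, hij, rfl | rfl | rfl | rfl⟩ | ⟨i, rfl | rfl⟩)
    · exact Or.inl ⟨j, i, hij.ne', 1, -1, h1, h2, by simp [sub_eq_add_neg]⟩
    · exact Or.inl ⟨j, i, hij.ne', -1, 1, h2, h1, by simp; abel⟩
    · exact Or.inl ⟨j, i, hij.ne', 1, 1, h1, h1, by simp⟩
    · exact Or.inl ⟨j, i, hij.ne', -1, -1, h2, h2, by simp; abel⟩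
    · exact Or.inr ⟨i, 1, h1, by simp⟩
    · exact Or.inr ⟨i, -1, h2, by simp⟩
  · rintro (⟨i, j, hij, a, b, ha, hb, rfl⟩ | ⟨i, a, ha, rfl⟩)
    · rcases Int.isUnit_iff.mp ha with rfl | rfl <;> rcases Int.isUnit_iff.mp hb with rfl | rfl <;>
        rcases hij.lt_or_gt with h | h
      all_goals refine Or.inl ⟨_, _, h, ?_⟩
      all_goals first
        | (refine Or.inl ?_; module)
        | (refine Or.inr (Or.inl ?_); module)
        | (refine Or.inr (Or.inr (Or.inl ?_)); module)
        | (refine Or.inr (Or.inr (Or.inr ?_)); module)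
    · rcases Int.isUnit_iff.mp ha with rfl | rfl
      · exact Or.inr ⟨i, Or.inl (by simp)⟩
      · exact Or.inr ⟨i, Or.inr (by simp)⟩

lemma mapsTo_Croots {f : (Fin n → ℝ) →ₗ[ℝ] (Fin n → ℝ)} {τ : Fin n → Fin n}
    (hτ : Function.Injective τ) {s : Fin n → ℤ} (hs : ∀ i, IsUnit (s i))
    (hf : ∀ i, f (eps n i) = (s i : ℝ) • eps n (τ i)) : MapsTo f (Croots n) (Croots n) := by
  intro v hv
  rw [mem_Croots_iff] at hv ⊢
  rcases hv with ⟨i, j, hij, a, b, ha, hb, rfl⟩ | ⟨i, a, ha, rfl⟩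
  · refine Or.inl ⟨τ i, τ j, hτ.ne hij, a * s i, b * s j, ha.mul (hs i), hb.mul (hs j), ?_⟩
    simp [hf, smul_smul]
  · exact Or.inr ⟨τ i, a * s i, ha.mul (hs i), by simp [hf, smul_smul, mul_assoc]⟩

lemma signFlip_eps (F : Finset (Fin n)) (i : Fin n) :
    signFlip F (eps n i) = ((if i ∈ F then -1 else 1 : ℤ) : ℝ) • eps n i := by
  ext k
  by_cases hk : k = i
  · subst hk; split_ifs with h <;> simp [eps, h]
  · simp [eps, hk]

lemma mapsTo_signFlip_Croots (F : Finset (Fin n)) :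
    MapsTo (signFlip F) (Croots n) (Croots n) :=
  mapsTo_Croots (f := (signFlip F).toLinearMap) Function.injective_id
    (fun i => by split_ifs <;> simp) (signFlip_eps F)

lemma funCongrLeft_eps (σ : Equiv.Perm (Fin n)) (i : Fin n) :
    LinearEquiv.funCongrLeft ℝ ℝ σ (eps n i) = eps n (σ.symm i) := by
  ext k
  simp [eps, LinearMap.funLeft, ← Equiv.eq_symm_apply]

lemma mapsTo_funCongrLeft_Croots (σ : Equiv.Perm (Fin n)) :
    MapsTo (LinearEquiv.funCongrLeft ℝ ℝ σ) (Croots n) (Croots n) :=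
  mapsTo_Croots (f := (LinearEquiv.funCongrLeft ℝ ℝ σ).toLinearMap) σ.symm.injective
    (fun _ => isUnit_one) fun i => by rw [Int.cast_one, one_smul]; exact funCongrLeft_eps σ i

lemma signFlip_dotProduct_signFlip (F : Finset (Fin n)) (u v : Fin n → ℝ) :
    signFlip F u ⬝ᵥ signFlip F v = u ⬝ᵥ v :=
  Finset.sum_congr rfl fun i _ => by by_cases hi : i ∈ F <;> simp [hi]

lemma funCongrLeft_dotProduct_funCongrLeft (σ : Equiv.Perm (Fin n)) (u v : Fin n → ℝ) :
    LinearEquiv.funCongrLeft ℝ ℝ σ u ⬝ᵥ LinearEquiv.funCongrLeft ℝ ℝ σ v = u ⬝ᵥ v :=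
  Equiv.sum_comp σ fun i => u i * v i

def CrootsDvd (n : ℕ) (c : ℝ) (y : Fin n → ℝ) : Set (Fin n → ℝ) :=
  {ρ ∈ Croots n | ∃ l : ℤ, ρ ⬝ᵥ y = c * l}

lemma image_CrootsDvd {w : (Fin n → ℝ) ≃ₗ[ℝ] (Fin n → ℝ)}
    (hw : MapsTo w (Croots n) (Croots n)) (hw' : MapsTo w.symm (Croots n) (Croots n))
    (hdot : ∀ u v, w u ⬝ᵥ w v = u ⬝ᵥ v) (c : ℝ) (y : Fin n → ℝ) :
    w '' CrootsDvd n c y = CrootsDvd n c (w y) := by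
  ext u
  constructor
  · rintro ⟨ρ, ⟨hρ, l, hl⟩, rfl⟩
    exact ⟨hw hρ, l, by rw [hdot, hl]⟩
  · rintro ⟨hu, l, hl⟩
    refine ⟨w.symm u, ⟨hw' hu, l, ?_⟩, w.apply_symm_apply u⟩
    rw [← hdot, w.apply_symm_apply, hl]

lemma CrootsDvd_congr {c : ℝ} {y y' : Fin n → ℝ} (h : ∀ i, ∃ k : ℤ, y i = y' i + c * k) :
    CrootsDvd n c y = CrootsDvd n c y' := by
  choose k hk using h
  suffices key : ∀ ρ ∈ Croots n, ∃ r : ℤ, ρ ⬝ᵥ y = ρ ⬝ᵥ y' + c * r by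
    ext ρ
    refine and_congr_right fun hρ => ?_
    obtain ⟨r, hr⟩ := key ρ hρ
    rw [hr]
    constructor
    · rintro ⟨l, hl⟩; exact ⟨l - r, by push_cast; linarith⟩
    · rintro ⟨l, hl⟩; exact ⟨l + r, by push_cast; linarith⟩
  intro ρ hρ
  rcases mem_Croots_iff.mp hρ with ⟨i, j, -, a, b, -, -, rfl⟩ | ⟨i, a, -, rfl⟩
  · exact ⟨a * k i + b * k j, by simp [eps_eq_single, add_dotProduct, hk]; ring⟩
  · exact ⟨2 * a * k i, by simp [eps_eq_single, hk]; ring⟩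

lemma int_eq_neg_one_or_zero_or_one {c t : ℝ} {l : ℤ} (hc : 0 < c) (ht : |t| ≤ c)
    (hl : t = c * l) : l = -1 ∨ l = 0 ∨ l = 1 := by
  rw [hl, abs_mul, abs_of_pos hc, mul_le_iff_le_one_right hc] at ht
  have h : |l| ≤ 1 := by exact_mod_cast ht
  rw [abs_le] at h
  omega

lemma exists_int_mul_add_mul_iff {c x y : ℝ} (hx : 0 < x) (hxc : x ≤ c / 2) (hy : 0 < y)
    (hyc : y ≤ c / 2) {a b : ℤ} (ha : IsUnit a) (hb : IsUnit b) :
    (∃ l : ℤ, a * x + b * y = c * l) ↔ (b = -a ∧ x = y) ∨ (x = c / 2 ∧ y = c / 2) := by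
  have hc : 0 < c := by linarith
  constructor
  · rintro ⟨l, hl⟩
    -- `|a * x + b * y| ≤ c` forces `l ∈ {-1, 0, 1}`; each sign case is then linear arithmetic.
    rcases Int.isUnit_iff.mp ha with rfl | rfl <;> rcases Int.isUnit_iff.mp hb with rfl | rfl <;>
      push_cast at hl <;>
      rcases int_eq_neg_one_or_zero_or_one hc (abs_le.mpr ⟨by linarith, by linarith⟩) hl
        with rfl | rfl | rfl <;> push_cast at hl <;>
      first
        | exact Or.inl ⟨by decide, by linarith⟩
        | exact Or.inr ⟨by linarith, by linarith⟩
  · rintro (⟨rfl, rfl⟩ | ⟨rfl, rfl⟩)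
    · exact ⟨0, by push_cast; ring⟩
    · rcases Int.isUnit_iff.mp ha with rfl | rfl <;> rcases Int.isUnit_iff.mp hb with rfl | rfl
      exacts [⟨1, by push_cast; ring⟩, ⟨0, by push_cast; ring⟩, ⟨0, by push_cast; ring⟩,
        ⟨-1, by push_cast; ring⟩]

lemma exists_int_two_mul_iff {c x : ℝ} (hx : 0 < x) (hxc : x ≤ c / 2) {a : ℤ} (ha : IsUnit a) :
    (∃ l : ℤ, 2 * a * x = c * l) ↔ x = c / 2 := by
  have hc : 0 < c := by linarith
  refine ⟨fun ⟨l, hl⟩ => ?_, fun hx => ⟨a, by rw [hx]; ring⟩⟩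
  rcases Int.isUnit_iff.mp ha with rfl | rfl <;> push_cast at hl <;>
    rcases int_eq_neg_one_or_zero_or_one hc (abs_le.mpr ⟨by linarith, by linarith⟩) hl
      with rfl | rfl | rfl <;> push_cast at hl <;> linarith

section Levi

variable {c : ℝ} {z : Fin n → ℝ}

def leviSimple (c : ℝ) (z : Fin n → ℝ) : Set (Fin n → ℝ) :=
  {v | (∃ i : Fin n, (i : ℕ) = 0 ∧ z i = c / 2 ∧ v = (2 : ℝ) • eps n i) ∨
       ∃ i j : Fin n, (j : ℕ) = i + 1 ∧ z i = z j ∧ v = eps n j - eps n i}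

lemma leviSimple_subset_CsimpleSet : leviSimple c z ⊆ CsimpleSet n := by
  rintro v (⟨i, hi, -, rfl⟩ | ⟨i, j, hij, -, rfl⟩)
  exacts [Or.inl ⟨i, hi, rfl⟩, Or.inr ⟨i, j, hij, rfl⟩]

lemma sum_filter_eps (t : ℝ) (i : Fin n) :
    ∑ p with z p = t, eps n i p = if z i = t then 1 else 0 := by
  simp [eps_eq_single, Finset.sum_pi_single']

lemma sum_filter_eq_zero_of_mem_span {t : ℝ} (ht : t ≠ c / 2) {v : Fin n → ℝ}
    (hv : v ∈ span ℝ (leviSimple c z)) : ∑ p with z p = t, v p = 0 := by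
  induction hv using Submodule.span_induction with
  | mem v hv =>
    rcases hv with ⟨i, -, hi, rfl⟩ | ⟨i, j, -, hij, rfl⟩
    · simp [← Finset.mul_sum, sum_filter_eps, hi, ht.symm]
    · simp [Finset.sum_sub_distrib, sum_filter_eps, hij]
  | zero => simp
  | add u v _ _ hu hv => simp [Finset.sum_add_distrib, hu, hv]
  | smul a v _ hv => simp [← Finset.mul_sum, hv]

lemma sub_mem_span_leviSimple (hz : Antitone z) {p q : Fin n} (h : z p = z q) :
    eps n q - eps n p ∈ span ℝ (leviSimple c z) := by
  wlog hpq : p ≤ q generalizing p q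
  · simpa using neg_mem (this h.symm (le_of_not_ge hpq))
  obtain ⟨k, hk⟩ : ∃ k, (q : ℕ) = p + k := ⟨q - p, by omega⟩
  induction k generalizing q with
  | zero =>
    obtain rfl : q = p := Fin.ext (by omega)
    simp
  | succ k ih =>
    let r : Fin n := ⟨p + k, by omega⟩
    have hpr : p ≤ r := Fin.le_def.mpr (by simp [r])
    have hrq : r ≤ q := Fin.le_def.mpr (by simp [r]; omega)
    have hr : z p = z r := le_antisymm (h ▸ hz hrq) (hz hpr)
    have hstep : eps n q - eps n r ∈ span ℝ (leviSimple c z) :=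
      subset_span (Or.inr ⟨r, q, by simp [r]; omega, hr ▸ h, rfl⟩)
    simpa using add_mem hstep (ih hr hpr rfl)

lemma eps_mem_span_leviSimple (hz : Antitone z) (hle : ∀ i, z i ≤ c / 2) {p : Fin n}
    (hp : z p = c / 2) : eps n p ∈ span ℝ (leviSimple c z) := by
  let o : Fin n := ⟨0, p.pos⟩
  have ho : z o = c / 2 := le_antisymm (hle o) (hp ▸ hz (Fin.le_def.mpr p.val.zero_le))
  have h2o : (2 : ℝ) • eps n o ∈ span ℝ (leviSimple c z) := subset_span (Or.inl ⟨o, rfl, ho, rfl⟩)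
  have hpo := sub_mem_span_leviSimple (c := c) hz (ho.trans hp.symm)
  convert add_mem hpo (smul_mem _ (1 / 2 : ℝ) h2o) using 1
  module

lemma pair_mem_span_leviSimple_iff (hz : Antitone z) (hle : ∀ i, z i ≤ c / 2) {i j : Fin n}
    {a b : ℤ} (ha : IsUnit a) (hb : IsUnit b) :
    (a : ℝ) • eps n i + (b : ℝ) • eps n j ∈ span ℝ (leviSimple c z) ↔
      (b = -a ∧ z i = z j) ∨ (z i = c / 2 ∧ z j = c / 2) := by
  constructor
  · intro h
    have hsum (t : ℝ) (ht : t ≠ c / 2) :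
        (if z i = t then (a : ℝ) else 0) + (if z j = t then (b : ℝ) else 0) = 0 := by
      simpa [Finset.sum_add_distrib, ← Finset.mul_sum, sum_filter_eps]
        using sum_filter_eq_zero_of_mem_span ht h
    by_cases hi : z i = c / 2
    · by_cases hj : z j = c / 2
      · exact Or.inr ⟨hi, hj⟩
      · have := hsum (z j) hj
        rw [if_neg (hi.trans_ne (Ne.symm hj)), if_pos rfl, zero_add] at this
        exact absurd (Int.cast_eq_zero.mp this) hb.ne_zero
    · have := hsum (z i) hi
      rw [if_pos rfl] at this
      by_cases hji : z j = z i
      · rw [if_pos hji] at this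
        exact Or.inl ⟨by exact_mod_cast eq_neg_of_add_eq_zero_right this, hji.symm⟩
      · rw [if_neg hji, add_zero] at this
        exact absurd (Int.cast_eq_zero.mp this) ha.ne_zero
  · rintro (⟨rfl, h⟩ | ⟨hi, hj⟩)
    · convert smul_mem _ (-(a : ℝ)) (sub_mem_span_leviSimple hz h) using 1
      push_cast
      module
    · exact add_mem (smul_mem _ _ (eps_mem_span_leviSimple hz hle hi))
        (smul_mem _ _ (eps_mem_span_leviSimple hz hle hj))

lemma long_mem_span_leviSimple_iff (hz : Antitone z) (hle : ∀ i, z i ≤ c / 2) {i : Fin n} {a : ℤ}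
    (ha : IsUnit a) : (2 * a : ℝ) • eps n i ∈ span ℝ (leviSimple c z) ↔ z i = c / 2 := by
  refine ⟨fun h => ?_, fun hi => smul_mem _ _ (eps_mem_span_leviSimple hz hle hi)⟩
  by_contra hi
  have := sum_filter_eq_zero_of_mem_span hi h
  simp [← Finset.mul_sum, sum_filter_eps, ha.ne_zero] at this

theorem CrootsDvd_eq_inter_span_leviSimple (hz : Antitone z) (hpos : ∀ i, 0 < z i)
    (hle : ∀ i, z i ≤ c / 2) : CrootsDvd n c z = Croots n ∩ span ℝ (leviSimple c z) := by
  ext ρ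
  refine and_congr_right fun hρ => ?_
  rcases mem_Croots_iff.mp hρ with ⟨i, j, -, a, b, ha, hb, rfl⟩ | ⟨i, a, ha, rfl⟩
  · rw [SetLike.mem_coe, pair_mem_span_leviSimple_iff hz hle ha hb,
      ← exists_int_mul_add_mul_iff (hpos i) (hle i) (hpos j) (hle j) ha hb]
    simp [eps_eq_single, add_dotProduct]
  · rw [SetLike.mem_coe, long_mem_span_leviSimple_iff hz hle ha,
      ← exists_int_two_mul_iff (hpos i) (hle i) ha]
    simp [eps_eq_single, mul_assoc]

end Levi

lemma image_signFlip_CrootsDvd (F : Finset (Fin n)) (c : ℝ) (y : Fin n → ℝ) :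
    signFlip F '' CrootsDvd n c y = CrootsDvd n c (signFlip F y) :=
  image_CrootsDvd (mapsTo_signFlip_Croots F) (signFlip_symm F ▸ mapsTo_signFlip_Croots F)
    (signFlip_dotProduct_signFlip F) c y

lemma image_funCongrLeft_CrootsDvd (σ : Equiv.Perm (Fin n)) (c : ℝ) (y : Fin n → ℝ) :
    LinearEquiv.funCongrLeft ℝ ℝ σ '' CrootsDvd n c y =
      CrootsDvd n c (LinearEquiv.funCongrLeft ℝ ℝ σ y) :=
  image_CrootsDvd (mapsTo_funCongrLeft_Croots σ)
    (LinearEquiv.funCongrLeft_symm ℝ ℝ σ ▸ mapsTo_funCongrLeft_Croots σ.symm)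
    (funCongrLeft_dotProduct_funCongrLeft σ) c y

lemma signFlip_filter_neg (v : Fin n → ℝ) : signFlip {i | v i < 0} v = fun i => |v i| := by
  ext i
  by_cases hi : v i < 0
  · simp [hi, abs_of_neg hi]
  · simp [hi, abs_of_nonneg (not_lt.mp hi)]

lemma exists_int_abs_sub_mul_le {c x : ℝ} (hc : 0 < c) (hx : ∀ k : ℤ, x ≠ c * k) :
    ∃ k : ℤ, 0 < |x - c * k| ∧ |x - c * k| ≤ c / 2 := by
  refine ⟨round (x / c), abs_pos.mpr (sub_ne_zero.mpr (hx _)), ?_⟩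
  have h : x - c * round (x / c) = c * (x / c - round (x / c)) := by
    rw [mul_sub, mul_div_cancel₀ _ hc.ne']
  rw [h, abs_mul, abs_of_pos hc]
  nlinarith [abs_sub_round (x / c)]

theorem exists_mem_CWeyl_image_CrootsDvd {c : ℝ} (hc : 0 < c) {y : Fin n → ℝ}
    (hy : ∀ i (k : ℤ), y i ≠ c * k) :
    ∃ w ∈ CWeyl n, ∃ S ⊆ CsimpleSet n,
      (w : (Fin n → ℝ) → (Fin n → ℝ)) '' CrootsDvd n c y = Croots n ∩ span ℝ S := by
  choose k hk using fun i => exists_int_abs_sub_mul_le hc (hy i)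
  let y' : Fin n → ℝ := fun i => y i - c * k i
  let σ := Tuple.sort fun i => -|y' i|
  let z : Fin n → ℝ := fun i => |y' (σ i)|
  have hz : Antitone z := fun i j hij =>
    neg_le_neg_iff.mp (Tuple.monotone_sort (fun i => -|y' i|) hij)
  let P := LinearEquiv.funCongrLeft ℝ ℝ σ
  let Q := signFlip {i | y' i < 0}
  refine ⟨P * Q, mul_mem (funCongrLeft_mem_CWeyl σ) (signFlip_mem_CWeyl _), leviSimple c z,
    leviSimple_subset_CsimpleSet, ?_⟩
  calc ⇑(P * Q) '' CrootsDvd n c y = P '' (Q '' CrootsDvd n c y') := by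
        rw [CrootsDvd_congr (y' := y') fun i => ⟨k i, by ring⟩]
        exact image_comp P Q _
    _ = CrootsDvd n c z := by
        rw [image_signFlip_CrootsDvd, image_funCongrLeft_CrootsDvd, signFlip_filter_neg]
        rfl
    _ = Croots n ∩ span ℝ (leviSimple c z) :=
        CrootsDvd_eq_inter_span_leviSimple hz (fun i => (hk _).1) (fun i => (hk _).2)

end

theorem stmt4_general (n : ℕ) (m : ℕ) (hm : 2 ≤ m) :
    ∃ w ∈ CWeyl n, ∃ S ⊆ CsimpleSet n,
      (w : (Fin n → ℝ) → (Fin n → ℝ)) '' {v ∈ Croots n | ∃ l : ℤ, htC n v = (m : ℝ) * l} =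
        Croots n ∩ (Submodule.span ℝ S : Submodule ℝ (Fin n → ℝ)) := by
  have half_int_ne (i : Fin n) (k : ℤ) : (i : ℝ) + 1 / 2 ≠ m * k := by
    intro h
    have : (2 * i + 1 : ℤ) = 2 * (m * k) := by
      have : (2 * i + 1 : ℝ) = 2 * (m * k) := by linarith
      exact_mod_cast this
    omega
  -- `htC n v` unfolds to `v ⬝ᵥ fun i => i + 1/2`, so the left-hand set is `CrootsDvd n m _`.
  exact exists_mem_CWeyl_image_CrootsDvd (Nat.cast_pos.mpr (by omega)) half_int_ne

/-- for `m ≥ 2`, the set `R(m)` of all roots of `Cₙ` whose height is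
divisible by `m` is of Levi type: some element `w` of the Weyl group maps `R(m)`
bijectively onto `R ∩ span_ℝ(S)` for some subset `S` of the simple roots. -/
theorem stmt4 (n : ℕ) (hn : 2 ≤ n) (m : ℕ) (hm : 2 ≤ m) :
    ∃ w ∈ CWeyl n, ∃ S ⊆ CsimpleSet n,
      (w : (Fin n → ℝ) → (Fin n → ℝ)) '' {v ∈ Croots n | ∃ l : ℤ, htC n v = (m : ℝ) * l} =
        Croots n ∩ (Submodule.span ℝ S : Submodule ℝ (Fin n → ℝ)) :=
  stmt4_general n m hm
end
end

section
/- Let n ≥ 3 and let m ≥ 2 be an integer such that m is odd or 3m > 2n (i.e. m is not of the form 2k with 3k ≤ n). Then every positive root of B_n whose height is divisible by m can be written as a sum of roots of height exactly m. -/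
/-!
Write the positive roots as `εᵢ`, `εⱼ - εᵢ` and `εⱼ + εᵢ` (`i < j`), of heights `i`, `j - i` and
`i + j`. Differences `εⱼ - εᵢ` with `m ∣ j - i` telescope into roots `ε_{k+m} - ε_k` of height `m`,
and `εᵢ` with `m ∣ i` is `ε_m` plus such a difference. For `εⱼ + εᵢ` with `m ∣ i + j` and
`m ∤ i`, the residues `r, s` of `i, j` mod `m` satisfy `r + s = m`, so
`εⱼ + εᵢ = (ε_s + ε_r) + (εⱼ - ε_s) + (εᵢ - ε_r)` with `ε_s + ε_r` of height `m`, provided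
`r ≠ s`. If `r = s` then `m = 2r` is even and `r ≤ i`, `i + 2r ≤ j ≤ n` force `3m ≤ 2n`.
-/

noncomputable section

/-- The root system of type `Bₙ`. -/
def Broots (n : ℕ) : Set (Fin n → ℝ) :=
  {v | (∃ i : Fin n, v = eps n i ∨ v = -eps n i) ∨
       (∃ i j : Fin n, i < j ∧
         (v = eps n j - eps n i ∨ v = -(eps n j - eps n i) ∨
          v = eps n j + eps n i ∨ v = -(eps n j + eps n i)))}

/-- The height functional for type `Bₙ`. -/
def htB (n : ℕ) (v : Fin n → ℝ) : ℝ := ∑ i : Fin n, v i * ((i : ℝ) + 1)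

variable {n m : ℕ}

lemma htB_eps (i : Fin n) : htB n (eps n i) = (i : ℝ) + 1 := by
  simp [htB, eps]

lemma htB_neg (v : Fin n → ℝ) : htB n (-v) = -htB n v := by
  simp [htB]

lemma htB_add (u v : Fin n → ℝ) : htB n (u + v) = htB n u + htB n v := by
  simp [htB, add_mul, Finset.sum_add_distrib]

lemma htB_sub (u v : Fin n → ℝ) : htB n (u - v) = htB n u - htB n v := by
  simp [htB, sub_mul, Finset.sum_sub_distrib]

lemma eps_mem_Broots (i : Fin n) : eps n i ∈ Broots n :=
  Or.inl ⟨i, Or.inl rfl⟩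

lemma eps_sub_eps_mem_Broots {i j : Fin n} (h : i < j) : eps n j - eps n i ∈ Broots n :=
  Or.inr ⟨i, j, h, Or.inl rfl⟩

lemma eps_add_eps_mem_Broots {i j : Fin n} (h : i ≠ j) : eps n j + eps n i ∈ Broots n := by
  rcases h.lt_or_gt with h | h
  · exact Or.inr ⟨i, j, h, Or.inr (Or.inr (Or.inl rfl))⟩
  · exact Or.inr ⟨j, i, h, Or.inr (Or.inr (Or.inl (add_comm _ _)))⟩

lemma Broots_pos_cases {v : Fin n → ℝ} (hv : v ∈ Broots n) (hpos : 0 < htB n v) :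
    (∃ i, v = eps n i) ∨ (∃ i j, i < j ∧ v = eps n j - eps n i) ∨
      (∃ i j, i < j ∧ v = eps n j + eps n i) := by
  rcases hv with ⟨i, rfl | rfl⟩ | ⟨i, j, hij, rfl | rfl | rfl | rfl⟩
  · exact Or.inl ⟨i, rfl⟩
  · simp only [htB_neg, htB_eps] at hpos
    linarith [(i : ℕ).cast_nonneg (α := ℝ)]
  · exact Or.inr (Or.inl ⟨i, j, hij, rfl⟩)
  · have : ((i : ℕ) : ℝ) < (j : ℕ) := by exact_mod_cast hij
    simp only [htB_neg, htB_sub, htB_eps] at hpos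
    linarith
  · exact Or.inr (Or.inr ⟨i, j, hij, rfl⟩)
  · simp only [htB_neg, htB_add, htB_eps] at hpos
    linarith [(i : ℕ).cast_nonneg (α := ℝ), (j : ℕ).cast_nonneg (α := ℝ)]

lemma dvd_of_natCast_eq_mul {N : ℕ} {l : ℤ} (h : (N : ℝ) = m * l) : m ∣ N :=
  Int.natCast_dvd_natCast.mp ⟨l, by exact_mod_cast h⟩

lemma mod_ne_mod_of_dvd_add {a b : ℕ} (hcase : Odd m ∨ 2 * n < 3 * m) (hab : a < b) (hb : b ≤ n)
    (hdvd : m ∣ a + b) (ha : ¬ m ∣ a) : a % m ≠ b % m := by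
  intro hmod
  have hm : m ≠ 0 := by rintro rfl; simp at hdvd; omega
  have hr : a % m ≠ 0 := mt Nat.dvd_of_mod_eq_zero ha
  have hrm : a % m < m := Nat.mod_lt a (Nat.pos_of_ne_zero hm)
  have hm2 : a % m + a % m = m := by
    refine Nat.eq_of_dvd_of_lt_two_mul (by omega) (Nat.dvd_of_mod_eq_zero ?_) (by omega)
    rw [← Nat.mod_eq_zero_of_dvd hdvd, Nat.add_mod a b, ← hmod]
  have hgap : m ≤ b - a :=
    Nat.le_of_dvd (by omega) (Nat.dvd_of_mod_eq_zero (Nat.sub_mod_eq_zero_of_mod_eq hmod.symm))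
  have hra : a % m ≤ a := Nat.mod_le a m
  rcases hcase with ⟨k, hk⟩ | hlt <;> omega

def rootSumsOfHeight (n m : ℕ) : AddSubmonoid (Fin n → ℝ) :=
  AddSubmonoid.closure {u ∈ Broots n | htB n u = m}

lemma mem_rootSumsOfHeight_of_root {u : Fin n → ℝ} (hu : u ∈ Broots n) (h : htB n u = m) :
    u ∈ rootSumsOfHeight n m :=
  AddSubmonoid.subset_closure ⟨hu, h⟩

lemma eps_sub_eps_mem_rootSumsOfHeight (hm : 0 < m) {i j : Fin n} (hij : i ≤ j)
    (h : (i : ℕ) ≡ j [MOD m]) : eps n j - eps n i ∈ rootSumsOfHeight n m := by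
  obtain ⟨k, hk⟩ := (Nat.modEq_iff_dvd' hij).mp h
  clear h
  induction k generalizing j with
  | zero =>
    obtain rfl : j = i := Fin.ext (by simp at hk; omega)
    simp
  | succ k ih =>
    rw [Fin.le_def] at hij
    rw [mul_add, mul_one] at hk
    let j' : Fin n := ⟨j - m, by omega⟩
    have hj' : ((j' : ℕ) : ℝ) = (j : ℕ) - m := by
      rw [← Nat.cast_sub (by omega)]
    have step : eps n j - eps n j' ∈ rootSumsOfHeight n m :=
      mem_rootSumsOfHeight_of_root (eps_sub_eps_mem_Broots (Fin.lt_def.mpr (by simp [j']; omega)))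
        (by rw [htB_sub, htB_eps, htB_eps, hj']; ring)
    have rest := ih (j := j') (Fin.le_def.mpr (by simp [j']; omega)) (by simp [j']; omega)
    simpa using add_mem step rest

lemma exists_eps_sub_eps_mem_rootSumsOfHeight (hm : 0 < m) (i : Fin n) {r : ℕ} (hr : 0 < r)
    (hri : r ≤ i + 1) (h : r ≡ i + 1 [MOD m]) :
    ∃ a : Fin n, (a : ℕ) + 1 = r ∧ eps n i - eps n a ∈ rootSumsOfHeight n m := by
  refine ⟨⟨r - 1, by omega⟩, by simp; omega, eps_sub_eps_mem_rootSumsOfHeight hm ?_ ?_⟩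
  · exact Fin.le_def.mpr (by simp; omega)
  · exact Nat.ModEq.add_right_cancel' 1 (by simpa [Nat.sub_add_cancel hr] using h)

lemma eps_mem_rootSumsOfHeight (i : Fin n) (h : m ∣ i + 1) : eps n i ∈ rootSumsOfHeight n m := by
  have hm : 0 < m := Nat.pos_of_dvd_of_pos h i.val.succ_pos
  obtain ⟨a, ha, hdiff⟩ := exists_eps_sub_eps_mem_rootSumsOfHeight hm i hm
    (Nat.le_of_dvd i.val.succ_pos h)
    ((Nat.modEq_zero_iff_dvd.mpr dvd_rfl).trans (Nat.modEq_zero_iff_dvd.mpr h).symm)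
  have base : eps n a ∈ rootSumsOfHeight n m :=
    mem_rootSumsOfHeight_of_root (eps_mem_Broots a) (by rw [htB_eps]; exact_mod_cast ha)
  simpa using add_mem base hdiff

lemma eps_add_eps_mem_rootSumsOfHeight (hcase : Odd m ∨ 2 * n < 3 * m) {i j : Fin n}
    (hij : i < j) (h : m ∣ (i + 1) + (j + 1)) : eps n j + eps n i ∈ rootSumsOfHeight n m := by
  by_cases hi : m ∣ i + 1
  · exact add_mem (eps_mem_rootSumsOfHeight j ((Nat.dvd_add_right hi).mp h))
      (eps_mem_rootSumsOfHeight i hi)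
  have hm : 0 < m := Nat.pos_of_dvd_of_pos h (by omega)
  have hr : (i + 1) % m ≠ 0 := mt Nat.dvd_of_mod_eq_zero hi
  have hrm := Nat.mod_lt (i + 1) hm
  have hrs : (i + 1) % m + (j + 1) % m = m := by
    refine Nat.eq_of_dvd_of_lt_two_mul (by omega) (Nat.dvd_of_mod_eq_zero ?_) ?_
    · rw [← Nat.add_mod, Nat.mod_eq_zero_of_dvd h]
    · linarith [Nat.mod_lt (j + 1) hm]
  have hne : (i + 1) % m ≠ (j + 1) % m :=
    mod_ne_mod_of_dvd_add hcase (Nat.succ_lt_succ hij) j.isLt h hi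
  obtain ⟨a, ha, hia⟩ := exists_eps_sub_eps_mem_rootSumsOfHeight hm i (Nat.pos_of_ne_zero hr)
    (Nat.mod_le _ _) (Nat.mod_modEq _ _)
  obtain ⟨b, hb, hjb⟩ := exists_eps_sub_eps_mem_rootSumsOfHeight hm j (r := (j + 1) % m)
    (by omega) (Nat.mod_le _ _) (Nat.mod_modEq _ _)
  have base : eps n b + eps n a ∈ rootSumsOfHeight n m := by
    refine mem_rootSumsOfHeight_of_root (eps_add_eps_mem_Broots fun hab => hne ?_) ?_
    · rw [← ha, ← hb, hab]
    · rw [htB_add, htB_eps, htB_eps]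
      exact_mod_cast (by omega : (b : ℕ) + 1 + ((a : ℕ) + 1) = m)
  have hsplit : eps n j + eps n i =
      (eps n b + eps n a) + (eps n j - eps n b) + (eps n i - eps n a) := by abel
  rw [hsplit]
  exact add_mem (add_mem base hjb) hia

theorem stmt6_general (n : ℕ) (m : ℕ) (hm : 2 ≤ m)
    (hcase : Odd m ∨ 2 * n < 3 * m) :
    ∀ v ∈ Broots n, 0 < htB n v → (∃ l : ℤ, htB n v = (m : ℝ) * l) →
      v ∈ AddSubmonoid.closure {u ∈ Broots n | htB n u = (m : ℝ)} := by
  rintro v hv hpos ⟨l, hl⟩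
  rcases Broots_pos_cases hv hpos with ⟨i, rfl⟩ | ⟨i, j, hij, rfl⟩ | ⟨i, j, hij, rfl⟩
  · refine eps_mem_rootSumsOfHeight i (dvd_of_natCast_eq_mul (l := l) ?_)
    rw [← hl, htB_eps]; push_cast; ring
  · have hij' : (i : ℕ) ≤ j := hij.le
    refine eps_sub_eps_mem_rootSumsOfHeight (by omega) hij.le
      ((Nat.modEq_iff_dvd' hij').mpr (dvd_of_natCast_eq_mul (l := l) ?_))
    rw [← hl, htB_sub, htB_eps, htB_eps, Nat.cast_sub hij']; ring
  · refine eps_add_eps_mem_rootSumsOfHeight hcase hij (dvd_of_natCast_eq_mul (l := l) ?_)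
    rw [← hl, htB_add, htB_eps, htB_eps]; push_cast; ring

/-- let `n ≥ 3` and `m ≥ 2` with `m` odd or `3m > 2n`. Then every
positive root of `Bₙ` whose height is divisible by `m` is a sum of roots of
height exactly `m`. -/
theorem stmt6 (n : ℕ) (hn : 3 ≤ n) (m : ℕ) (hm : 2 ≤ m)
    (hcase : Odd m ∨ 2 * n < 3 * m) :
    ∀ v ∈ Broots n, 0 < htB n v → (∃ l : ℤ, htB n v = (m : ℝ) * l) →
      v ∈ AddSubmonoid.closure {u ∈ Broots n | htB n u = (m : ℝ)} :=
  stmt6_general n m hm hcase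

end
end

section
/- In E6, the vector γ_4 = α_2 + α_3 + α_4 + α_5 (coefficient vector (0,1,1,1,1,0)) is a root of height 4 which is not the sum of two roots of height 2, and it satisfies γ_4ᵀ A c = 0 for every root c of height 2. Moreover, the number of positive roots of E6 of even height is 16, and every positive root of even height can be written as a sum of elements of R_2 ∪ {γ_4}. -/
open Matrix

/-- The Cartan matrix of type `E₆` in Bourbaki numbering (index `i : Fin 6` is node `i+1`):
the chain is `1 - 3 - 4 - 5 - 6` and node `2` is joined to node `4`. -/
def cartanE6 : Matrix (Fin 6) (Fin 6) ℤ :=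
  !![ 2,  0, -1,  0,  0,  0;
      0,  2,  0, -1,  0,  0;
     -1,  0,  2, -1,  0,  0;
      0, -1, -1,  2, -1,  0;
      0,  0,  0, -1,  2, -1;
      0,  0,  0,  0, -1,  2]

/-- The roots of `E₆`, identified with their coefficient vectors `c` with respect to the
simple roots: `R = {c ∈ ℤ^6 : cᵀ A c = 2}`. -/
def rootsE6 : Set (Fin 6 → ℤ) := {c | c ⬝ᵥ cartanE6.mulVec c = 2}

/-- The height of a coefficient vector. -/
def htE6 (c : Fin 6 → ℤ) : ℤ := ∑ i, c i

/-- `γ₄ = α₂ + α₃ + α₄ + α₅`, coefficient vector `(0,1,1,1,1,0)`. -/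
def γ₄ : Fin 6 → ℤ := ![0, 1, 1, 1, 1, 0]

/-! Roots are the integer points on the level set `cᵀ A c = 2` of a positive definite form, so
their coefficients are bounded by those of the highest root `(1,2,2,3,2,1)` and every claim about
all roots is a finite check over a box. The orthogonality of `γ₄` to `R₂` already shows that `γ₄`
is not a sum of two roots of height `2`: that would give
`2 = γ₄ᵀ A γ₄ = γ₄ᵀ A a + γ₄ᵀ A b = 0`. Finally, the five positive roots of height `2` together
with `γ₄` form a `ℤ`-basis of the lattice of even-height vectors, and the positive roots of even
height have nonnegative coordinates in this basis. -/

lemma dotProduct_cartanE6_mulVec_self (c : Fin 6 → ℤ) :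
    c ⬝ᵥ cartanE6 *ᵥ c = 2 * (c 0 ^ 2 + c 1 ^ 2 + c 2 ^ 2 + c 3 ^ 2 + c 4 ^ 2 + c 5 ^ 2)
      - 2 * (c 0 * c 2 + c 1 * c 3 + c 2 * c 3 + c 3 * c 4 + c 4 * c 5) := by
  simp only [dotProduct, mulVec, cartanE6, of_apply, cons_val', cons_val_fin_one,
    Fin.sum_univ_six, cons_val_zero, cons_val_one, cons_val]
  ring

lemma Int.mem_Icc_of_sq_lt {x n : ℤ} (hn : 0 ≤ n) (h : x ^ 2 < (n + 1) ^ 2) :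
    x ∈ Finset.Icc (-n) n := by
  obtain ⟨h₁, h₂⟩ := abs_lt_of_sq_lt_sq' h (by omega)
  exact Finset.mem_Icc.2 ⟨by omega, by omega⟩

lemma mem_Icc_of_mem_rootsE6 {c : Fin 6 → ℤ} (hc : c ∈ rootsE6) :
    c 0 ∈ Finset.Icc (-1) 1 ∧ c 1 ∈ Finset.Icc (-2) 2 ∧ c 2 ∈ Finset.Icc (-2) 2 ∧
      c 3 ∈ Finset.Icc (-3) 3 ∧ c 4 ∈ Finset.Icc (-2) 2 ∧ c 5 ∈ Finset.Icc (-1) 1 := by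
  have hq := dotProduct_cartanE6_mulVec_self c
  rw [show c ⬝ᵥ cartanE6 *ᵥ c = 2 from hc] at hq
  refine ⟨Int.mem_Icc_of_sq_lt (by norm_num) ?_, Int.mem_Icc_of_sq_lt (by norm_num) ?_,
    Int.mem_Icc_of_sq_lt (by norm_num) ?_, Int.mem_Icc_of_sq_lt (by norm_num) ?_,
    Int.mem_Icc_of_sq_lt (by norm_num) ?_, Int.mem_Icc_of_sq_lt (by norm_num) ?_⟩
  -- `cᵢ² ≤ (A⁻¹)ᵢᵢ · cᵀ A c` with `diag A⁻¹ = (4/3, 2, 10/3, 6, 10/3, 4/3)`; each list of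
  -- squares completes `cᵀ A c` to a multiple of `cᵢ²`.
  · nlinarith [sq_nonneg (2 * c 1 - c 3), sq_nonneg (c 0 - 2 * c 2 + c 3),
      sq_nonneg (c 0 - 2 * c 3 + 2 * c 4), sq_nonneg (c 0 - 2 * c 4 + 2 * c 5),
      sq_nonneg (c 0 - 2 * c 5)]
  · nlinarith [sq_nonneg (2 * c 0 - c 2), sq_nonneg (3 * c 2 - 2 * c 3),
      sq_nonneg (3 * c 1 - 4 * c 3 + 3 * c 4), sq_nonneg (3 * c 1 - 5 * c 4 + 4 * c 5),
      sq_nonneg (c 1 - 2 * c 5)]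
  · nlinarith [sq_nonneg (2 * c 0 - c 2), sq_nonneg (2 * c 1 - c 3),
      sq_nonneg (2 * c 2 - 3 * c 3 + 2 * c 4), sq_nonneg (2 * c 2 - 4 * c 4 + 3 * c 5),
      sq_nonneg (2 * c 2 - 5 * c 5)]
  · nlinarith [sq_nonneg (2 * c 0 - c 2), sq_nonneg (2 * c 1 - c 3),
      sq_nonneg (3 * c 2 - 2 * c 3), sq_nonneg (c 3 - 2 * c 4 + c 5), sq_nonneg (c 3 - 3 * c 5)]
  · nlinarith [sq_nonneg (2 * c 0 - c 2), sq_nonneg (2 * c 1 - c 3),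
      sq_nonneg (3 * c 2 - 2 * c 3), sq_nonneg (5 * c 3 - 6 * c 4), sq_nonneg (c 4 - 2 * c 5)]
  · nlinarith [sq_nonneg (2 * c 0 - c 2), sq_nonneg (2 * c 1 - c 3),
      sq_nonneg (3 * c 2 - 2 * c 3), sq_nonneg (5 * c 3 - 6 * c 4),
      sq_nonneg (4 * c 4 - 5 * c 5)]

lemma forall_mem_rootsE6_of_forall_Icc {P : (Fin 6 → ℤ) → Prop}
    (h : ∀ x₀ ∈ Finset.Icc (-1 : ℤ) 1, ∀ x₁ ∈ Finset.Icc (-2 : ℤ) 2,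
      ∀ x₂ ∈ Finset.Icc (-2 : ℤ) 2, ∀ x₃ ∈ Finset.Icc (-3 : ℤ) 3,
      ∀ x₄ ∈ Finset.Icc (-2 : ℤ) 2, ∀ x₅ ∈ Finset.Icc (-1 : ℤ) 1,
      2 * (x₀ ^ 2 + x₁ ^ 2 + x₂ ^ 2 + x₃ ^ 2 + x₄ ^ 2 + x₅ ^ 2)
        - 2 * (x₀ * x₂ + x₁ * x₃ + x₂ * x₃ + x₃ * x₄ + x₄ * x₅) = 2 →
      P ![x₀, x₁, x₂, x₃, x₄, x₅]) :
    ∀ c ∈ rootsE6, P c := by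
  intro c hc
  obtain ⟨h₀, h₁, h₂, h₃, h₄, h₅⟩ := mem_Icc_of_mem_rootsE6 hc
  have hq : c ⬝ᵥ cartanE6 *ᵥ c = 2 := hc
  rw [dotProduct_cartanE6_mulVec_self] at hq
  have hc : c = ![c 0, c 1, c 2, c 3, c 4, c 5] := by
    funext i; fin_cases i <;> rfl
  exact hc ▸ h _ h₀ _ h₁ _ h₂ _ h₃ _ h₄ _ h₅ hq

lemma γ₄_dotProduct_cartanE6_mulVec_eq_zero :
    ∀ c ∈ rootsE6, htE6 c = 2 → γ₄ ⬝ᵥ cartanE6 *ᵥ c = 0 :=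
  forall_mem_rootsE6_of_forall_Icc (by decide +kernel)

instance : DecidablePred (· ∈ rootsE6) := fun c =>
  inferInstanceAs (Decidable (c ⬝ᵥ cartanE6 *ᵥ c = 2))

lemma γ₄_mem_rootsE6 : γ₄ ∈ rootsE6 := by decide

lemma not_exists_add_eq_γ₄ :
    ¬ ∃ a b : Fin 6 → ℤ, a ∈ rootsE6 ∧ htE6 a = 2 ∧ b ∈ rootsE6 ∧ htE6 b = 2 ∧ γ₄ = a + b := by
  rintro ⟨a, b, ha, hta, hb, htb, hab⟩
  have hγ : γ₄ ⬝ᵥ cartanE6 *ᵥ γ₄ = 2 := γ₄_mem_rootsE6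
  nth_rw 2 [hab] at hγ
  rw [mulVec_add, dotProduct_add, γ₄_dotProduct_cartanE6_mulVec_eq_zero a ha hta,
    γ₄_dotProduct_cartanE6_mulVec_eq_zero b hb htb] at hγ
  omega

def positiveEvenRootsE6 : Finset (Fin 6 → ℤ) :=
  {![0, 0, 0, 0, 1, 1], ![0, 0, 0, 1, 1, 0], ![0, 0, 1, 1, 0, 0], ![0, 1, 0, 1, 0, 0],
    ![1, 0, 1, 0, 0, 0], ![0, 0, 1, 1, 1, 1], ![0, 1, 0, 1, 1, 1], ![0, 1, 1, 1, 1, 0],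
    ![1, 0, 1, 1, 1, 0], ![1, 1, 1, 1, 0, 0], ![0, 1, 1, 2, 1, 1], ![1, 1, 1, 1, 1, 1],
    ![1, 1, 1, 2, 1, 0], ![1, 1, 1, 2, 2, 1], ![1, 1, 2, 2, 1, 1], ![1, 1, 2, 3, 2, 1]}

lemma mem_positiveEvenRootsE6_of_mem_rootsE6 :
    ∀ c ∈ rootsE6, (∀ i, 0 ≤ c i) → 2 ∣ htE6 c → c ∈ positiveEvenRootsE6 :=
  forall_mem_rootsE6_of_forall_Icc (by decide +kernel)

lemma coe_positiveEvenRootsE6 :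
    (positiveEvenRootsE6 : Set (Fin 6 → ℤ)) = {c ∈ rootsE6 | (∀ i, 0 ≤ c i) ∧ 2 ∣ htE6 c} := by
  have hmem : ∀ c ∈ positiveEvenRootsE6, c ∈ rootsE6 ∧ (∀ i, 0 ≤ c i) ∧ 2 ∣ htE6 c := by
    decide
  ext c
  exact ⟨hmem c, fun ⟨hc, hpos, hev⟩ => mem_positiveEvenRootsE6_of_mem_rootsE6 c hc hpos hev⟩

def evenBasisE6 : Fin 6 → Fin 6 → ℤ :=
  ![![1, 0, 1, 0, 0, 0], ![0, 1, 0, 1, 0, 0], ![0, 0, 1, 1, 0, 0], ![0, 0, 0, 1, 1, 0],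
    ![0, 0, 0, 0, 1, 1], γ₄]

-- `m` is the `γ₄`-coordinate; the division is exact precisely on vectors of even height.
def evenCoordsE6 (c : Fin 6 → ℤ) : Fin 6 → ℤ :=
  let m := (c 1 + c 2 + c 4 - c 0 - c 3 - c 5) / 2
  ![c 0, c 1 - m, c 2 - c 0 - m, c 4 - c 5 - m, c 5, m]

lemma evenBasisE6_mem (j : Fin 6) : evenBasisE6 j ∈ {a ∈ rootsE6 | htE6 a = 2} ∪ {γ₄} := by
  fin_cases j
  all_goals first | exact Or.inr rfl | exact Or.inl ⟨by decide, by decide⟩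

lemma sum_evenCoordsE6_smul_evenBasisE6 {c : Fin 6 → ℤ} (hc : 2 ∣ htE6 c) :
    ∑ j, evenCoordsE6 c j • evenBasisE6 j = c := by
  obtain ⟨k, hk⟩ := hc
  simp only [htE6, Fin.sum_univ_six] at hk
  have hm : (c 1 + c 2 + c 4 - c 0 - c 3 - c 5) / 2 = k - c 0 - c 3 - c 5 := by omega
  funext i
  fin_cases i <;>
    simp only [evenCoordsE6, evenBasisE6, γ₄, hm, Fin.sum_univ_six, Finset.sum_apply, Pi.smul_apply,
      smul_eq_mul, cons_val, cons_val_zero, cons_val_one, Fin.zero_eta,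
      Fin.mk_one, Fin.reduceFinMk, Fin.isValue] <;>
    omega

lemma mem_closure_of_evenCoordsE6_nonneg {c : Fin 6 → ℤ} (hc : 2 ∣ htE6 c)
    (hn : ∀ j, 0 ≤ evenCoordsE6 c j) :
    c ∈ AddSubmonoid.closure ({a ∈ rootsE6 | htE6 a = 2} ∪ {γ₄}) := by
  rw [← sum_evenCoordsE6_smul_evenBasisE6 hc]
  refine AddSubmonoid.sum_mem _ fun j _ => ?_
  rw [← Int.toNat_of_nonneg (hn j), natCast_zsmul]
  exact AddSubmonoid.nsmul_mem _ (AddSubmonoid.subset_closure (evenBasisE6_mem j)) _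

lemma evenCoordsE6_nonneg : ∀ c ∈ positiveEvenRootsE6, ∀ j, 0 ≤ evenCoordsE6 c j := by
  decide

/-- in `E₆`, `γ₄` is a root of height `4`, not the sum of two roots of
height `2`, satisfying `γ₄ᵀ A c = 0` for every root `c` of height `2`; the number of
positive roots of even height is `16`, and every positive root of even height is a sum
of elements of `R₂ ∪ {γ₄}`. -/
theorem stmt11 :
    γ₄ ∈ rootsE6 ∧ htE6 γ₄ = 4 ∧
    (¬ ∃ a b : Fin 6 → ℤ, a ∈ rootsE6 ∧ htE6 a = 2 ∧ b ∈ rootsE6 ∧ htE6 b = 2 ∧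
        γ₄ = a + b) ∧
    (∀ c ∈ rootsE6, htE6 c = 2 → γ₄ ⬝ᵥ cartanE6.mulVec c = 0) ∧
    {c ∈ rootsE6 | (∀ i, 0 ≤ c i) ∧ 2 ∣ htE6 c}.ncard = 16 ∧
    (∀ c ∈ rootsE6, (∀ i, 0 ≤ c i) → 2 ∣ htE6 c →
      c ∈ AddSubmonoid.closure ({a ∈ rootsE6 | htE6 a = 2} ∪ {γ₄})) := by
  refine ⟨γ₄_mem_rootsE6, by decide, not_exists_add_eq_γ₄,
    γ₄_dotProduct_cartanE6_mulVec_eq_zero, ?_, fun c hc hpos hev => ?_⟩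
  · rw [← coe_positiveEvenRootsE6, Set.ncard_coe_finset]
    rfl
  · exact mem_closure_of_evenCoordsE6_nonneg hev
      (evenCoordsE6_nonneg c (mem_positiveEvenRootsE6_of_mem_rootsE6 c hc hpos hev))
end
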